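/- arXiv:1909.05446 — 8 statements merged into one kernel-verified Lean document; each statement's English description precedes it below -/
import Mathlib

section
/- Fix a lattice Ω ⊂ ℂ and a point z ∈ ℂ with z ∉ Ω. Then the family (1/(z-ω)² − 1/ω²), indexed by ω ∈ Ω∖{0}, is absolutely summable; consequently the Weierstrass ℘-function ℘(Ω,z) := 1/z² + ∑_{ω ∈ Ω∖{0}} (1/(z-ω)² − 1/ω²) is well defined for all z ∉ Ω. -/
/-- The lattice `ℤω₁ + ℤω₂` generated by two complex numbers. -/
def lattice (ω₁ ω₂ : ℂ) : Set ℂ := {w : ℂ | ∃ m n : ℤ, w = (m : ℂ) * ω₁ + (n : ℂ) * ω₂}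

/-- The Weierstrass ℘-function attached to a set `Ω ⊂ ℂ`. -/
noncomputable def wp (Ω : Set ℂ) (z : ℂ) : ℂ :=
  1 / z ^ 2 + ∑' ω : {w : ℂ // w ∈ Ω ∧ w ≠ 0}, (1 / (z - (ω : ℂ)) ^ 2 - 1 / (ω : ℂ) ^ 2)

/-!
The lattice is `PeriodPair.lattice` of Mathlib. Since `1/(z-ω)² − 1/ω² = z(2ω − z)/((z-ω)²ω²)`,
the summand is `O(‖ω‖⁻³)` once `‖ω‖ ≥ 2(‖z‖ + 1)`, which excludes only finitely many lattice
points, and `∑ ‖ω‖⁻³` converges over a lattice of rank two.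
-/

namespace PeriodPair

lemma coe_lattice (L : PeriodPair) : (L.lattice : Set ℂ) = _root_.lattice L.ω₁ L.ω₂ := by
  ext w
  simp only [SetLike.mem_coe, mem_lattice, _root_.lattice, Set.mem_ofPred_eq, eq_comm]

lemma summable_norm_weierstrassP_summand (L : PeriodPair) (z : ℂ) :
    Summable fun l : L.lattice => ‖1 / (z - l) ^ 2 - 1 / (l : ℂ) ^ 2‖ := by
  set r := ‖z‖ + 1
  have hr : 0 < r := by positivity
  refine Summable.of_norm_bounded_eventually
    ((ZLattice.summable_norm_rpow L.lattice (-3) (by norm_num)).mul_left (10 * r)) ?_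
  have hfinite : (Metric.closedBall (0 : L.lattice) (2 * r)).Finite :=
    isCompact_iff_finite.mp (isCompact_closedBall _ _)
  refine hfinite.subset fun l hl => ?_
  rw [Metric.mem_closedBall, dist_zero_right]
  by_contra! hfar
  exact hl <| (norm_norm _).trans_le (weierstrassP_bound r hr z (by simp [r]) l hfar.le)

end PeriodPair

theorem weierstrass_wp_summable_general (ω₁ ω₂ : ℂ) (hindep : LinearIndependent ℝ ![ω₁, ω₂])
    (z : ℂ) :
    Summable (fun ω : {w : ℂ // w ∈ lattice ω₁ ω₂ ∧ w ≠ 0} =>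
      ‖1 / (z - (ω : ℂ)) ^ 2 - 1 / (ω : ℂ) ^ 2‖) := by
  let L : PeriodPair := ⟨ω₁, ω₂, hindep⟩
  have hmem (ω : {w : ℂ // w ∈ lattice ω₁ ω₂ ∧ w ≠ 0}) : (ω : ℂ) ∈ L.lattice := by
    rw [← SetLike.mem_coe, L.coe_lattice]
    exact ω.2.1
  have hinj : Function.Injective fun ω => (⟨ω.1, hmem ω⟩ : L.lattice) :=
    fun _ _ h => Subtype.ext (congrArg Subtype.val h :)
  exact ((L.summable_norm_weierstrassP_summand z).comp_injective hinj :)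

/-- for a lattice `Ω` and `z ∉ Ω`, the family
`(1/(z-ω)² − 1/ω²)_{ω ∈ Ω∖{0}}` is absolutely summable, so that the Weierstrass
℘-function `℘(Ω,z) = 1/z² + ∑_{ω ∈ Ω∖{0}} (1/(z-ω)² − 1/ω²)` is well defined. -/
theorem weierstrass_wp_summable (ω₁ ω₂ : ℂ) (hindep : LinearIndependent ℝ ![ω₁, ω₂])
    (z : ℂ) (hz : z ∉ lattice ω₁ ω₂) :
    Summable (fun ω : {w : ℂ // w ∈ lattice ω₁ ω₂ ∧ w ≠ 0} =>
      ‖1 / (z - (ω : ℂ)) ^ 2 - 1 / (ω : ℂ) ^ 2‖) :=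
  weierstrass_wp_summable_general ω₁ ω₂ hindep z
end

section
/- Let (s,t) ∈ ℚ²∖ℤ². For every A = ((a,b),(c,d)) ∈ SL(2,ℤ) and every τ ∈ ℍ one has (f_{(s,t)} |₂ A)(τ) := (cτ+d)^{-2} · f_{(s,t)}((aτ+b)/(cτ+d)) = f_{(s,t)A}(τ), where (s,t)A = (sa+tc, sb+td). -/
/-- The lattice `ℤτ + ℤ`. -/
def lat (τ : ℂ) : Set ℂ := {w : ℂ | ∃ m n : ℤ, w = (m : ℂ) * τ + (n : ℂ)}

/-- `f_{(s,t)}(τ) = ℘(τ, sτ + t)`, where `℘(τ,z) = ℘(τℤ+ℤ, z)`. -/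
noncomputable def f (s t : ℚ) (τ : ℂ) : ℂ := wp (lat τ) ((s : ℂ) * τ + (t : ℂ))

/-- Homogeneity of degree `-2` for the (formal) Weierstrass ℘-function. -/
lemma wp_smul (Ω : Set ℂ) (lam z : ℂ) (hlam : lam ≠ 0) :
    wp ((lam * ·) '' Ω) (lam * z) = lam ^ (-2 : ℤ) * wp Ω z := by
  have hinv : lam ^ (-2 : ℤ) = 1 / lam ^ 2 := by
    rw [zpow_neg, one_div]; norm_cast
  unfold wp
  let e : {w : ℂ // w ∈ Ω ∧ w ≠ 0} ≃ {w : ℂ // w ∈ (lam * ·) '' Ω ∧ w ≠ 0} :=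
  { toFun := fun w => ⟨lam * w, ⟨⟨w, w.2.1, rfl⟩, mul_ne_zero hlam w.2.2⟩⟩
    invFun := fun w => ⟨lam⁻¹ * w, by
      obtain ⟨⟨u, hu, hw⟩, hne⟩ := w.2
      refine ⟨?_, mul_ne_zero (inv_ne_zero hlam) hne⟩
      rw [← hw]
      simpa [inv_mul_cancel_left₀ hlam] using hu⟩
    left_inv := fun w => by ext; simp [inv_mul_cancel_left₀ hlam]
    right_inv := fun w => by ext; simp [mul_inv_cancel_left₀ hlam] }
  rw [← Equiv.tsum_eq e]
  have hterm : ∀ w : {w : ℂ // w ∈ Ω ∧ w ≠ 0},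
      (1 / (lam * z - (e w : ℂ)) ^ 2 - 1 / ((e w : ℂ)) ^ 2)
        = lam ^ (-2 : ℤ) * (1 / (z - (w : ℂ)) ^ 2 - 1 / (w : ℂ) ^ 2) := by
    intro w
    have hw := w.2.2
    show (1 / (lam * z - lam * w) ^ 2 - 1 / (lam * (w : ℂ)) ^ 2) = _
    rw [hinv]
    rcases eq_or_ne (z - (w : ℂ)) 0 with h | h
    · rw [show lam * z - lam * w = lam * (z - w) by ring, h]
      field_simp
    · rw [show lam * z - lam * w = lam * (z - w) by ring]
      field_simp
  simp only [hterm]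
  rw [tsum_mul_left, mul_add]
  congr 1
  rw [hinv]
  field_simp

lemma denom_ne_zero (c d : ℤ) (hcd : ¬ (c = 0 ∧ d = 0)) (τ : ℂ) (hτ : 0 < τ.im) :
    (c : ℂ) * τ + (d : ℂ) ≠ 0 := by
  rcases eq_or_ne c 0 with hc | hc
  · subst hc
    have hd : d ≠ 0 := fun h => hcd ⟨rfl, h⟩
    simpa using fun h => hd (by exact_mod_cast h)
  · intro h
    have him : ((c : ℂ) * τ + (d : ℂ)).im = 0 := by rw [h]; simp
    simp [Complex.add_im, Complex.mul_im] at him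
    rcases him with h1 | h1
    · exact hc h1
    · exact (ne_of_gt hτ) h1

/-- The transformation law for the lattice `ℤτ + ℤ` under `SL(2,ℤ)`. -/
lemma lat_transform (a b c d : ℤ) (hA : a * d - b * c = 1) (τ : ℂ)
    (hlam : (c : ℂ) * τ + (d : ℂ) ≠ 0) :
    ((((c : ℂ) * τ + d) * ·) '' lat (((a : ℂ) * τ + b) / ((c : ℂ) * τ + d))) = lat τ := by
  have hAc : (a : ℂ) * d - b * c = 1 := by exact_mod_cast hA
  ext w
  constructor
  · rintro ⟨u, ⟨m, n, rfl⟩, rfl⟩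
    refine ⟨m * a + n * c, m * b + n * d, ?_⟩
    push_cast
    field_simp
    ring
  · rintro ⟨m, n, rfl⟩
    refine ⟨(m * d - n * c : ℤ) * (((a : ℂ) * τ + b) / ((c : ℂ) * τ + d)) + ((n * a - m * b : ℤ) : ℂ),
      ⟨m * d - n * c, n * a - m * b, rfl⟩, ?_⟩
    show ((c : ℂ) * τ + d) * _ = _
    push_cast
    have h1 : ((c : ℂ) * τ + d) * (((m : ℂ) * d - n * c) * (((a : ℂ) * τ + b) / ((c : ℂ) * τ + d))
        + ((n : ℂ) * a - m * b))
        = ((m : ℂ) * d - n * c) * ((a : ℂ) * τ + b) + ((n : ℂ) * a - m * b) * ((c : ℂ) * τ + d) := by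
      field_simp
    rw [h1]
    linear_combination ((m : ℂ) * τ + n) * hAc

/-- for `(s,t) ∈ ℚ²∖ℤ²`, `A = ((a,b),(c,d)) ∈ SL(2,ℤ)` and `τ ∈ ℍ`,
`(f_{(s,t)} |₂ A)(τ) = (cτ+d)⁻² f_{(s,t)}((aτ+b)/(cτ+d)) = f_{(s,t)A}(τ)`, where
`(s,t)A = (sa+tc, sb+td)`. -/
theorem f_slash_two (s t : ℚ) (hst : ¬ ∃ m n : ℤ, s = (m : ℚ) ∧ t = (n : ℚ))
    (a b c d : ℤ) (hA : a * d - b * c = 1) (τ : ℂ) (hτ : 0 < τ.im) :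
    ((c : ℂ) * τ + (d : ℂ)) ^ (-2 : ℤ) *
        f s t (((a : ℂ) * τ + (b : ℂ)) / ((c : ℂ) * τ + (d : ℂ))) =
      f (s * a + t * c) (s * b + t * d) τ := by
  have hcd : ¬ (c = 0 ∧ d = 0) := by
    rintro ⟨rfl, rfl⟩
    simp at hA
  have hlam : (c : ℂ) * τ + (d : ℂ) ≠ 0 := denom_ne_zero c d hcd τ hτ
  have hz : ((c : ℂ) * τ + d) * ((s : ℂ) * (((a : ℂ) * τ + b) / ((c : ℂ) * τ + d)) + (t : ℂ))
      = ((s * a + t * c : ℚ) : ℂ) * τ + ((s * b + t * d : ℚ) : ℂ) := by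
    push_cast
    field_simp
    ring
  unfold f
  rw [← wp_smul _ _ _ hlam, hz, lat_transform a b c d hA τ hlam]
end

section
/- Let (s,t) ∈ ℚ²∖ℤ². Then f_{(s,t)} |₂ A = f_{(s,t)} for every A ∈ Γ_{(s,t)} := { A ∈ SL(2,ℤ) : (s,t)A − (s,t) ∈ ℤ² }, where (s,t)A denotes the row vector–matrix product. -/
/-!
The sum defining `wp` is homogeneous of degree `-2`: `℘(μΩ, μz) = μ⁻² ℘(Ω, z)`, by reindexing
the sum along `ω ↦ μω` (so no convergence is needed). For `A ∈ SL(2,ℤ)` and `λ = cτ + d` we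
have `λ · (ℤ·Aτ + ℤ) = ℤτ + ℤ`, and the condition `A ∈ Γ_{(s,t)}` says exactly that
`λ (s·Aτ + t) = sτ + t + (mτ + n)` with `m, n ∈ ℤ`. Hence `(f|₂A)(τ) = ℘(τ, sτ + t + mτ + n)`,
and periodicity of `℘` (Mathlib's `PeriodPair.weierstrassP_add_coe`) gives `f(τ)`.
-/

open scoped Pointwise

lemma wp_smul_s3 (Ω : Set ℂ) {μ : ℂ} (hμ : μ ≠ 0) (z : ℂ) :
    wp (μ • Ω) (μ * z) = (μ ^ 2)⁻¹ * wp Ω z := by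
  let e : {w : ℂ // w ∈ Ω ∧ w ≠ 0} ≃ {w : ℂ // w ∈ μ • Ω ∧ w ≠ 0} :=
    (Equiv.mulLeft₀ μ hμ).subtypeEquiv fun w ↦ by
      simp [Set.smul_mem_smul_set_iff₀ hμ, ← smul_eq_mul, hμ]
  rw [wp, wp, ← e.tsum_eq, mul_add, ← tsum_mul_left]
  congr 1
  · field_simp
  · refine tsum_congr fun ω ↦ ?_
    change 1 / (μ * z - μ * ω) ^ 2 - 1 / (μ * ω) ^ 2 = _
    rw [← mul_sub]
    field_simp

lemma linearIndependent_self_one_of_im_ne_zero {τ : ℂ} (hτ : τ.im ≠ 0) :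
    LinearIndependent ℝ ![τ, 1] := by
  refine LinearIndependent.pair_iff.2 fun x y hxy ↦ ?_
  have hx : x = 0 := by simpa [hτ] using congrArg Complex.im hxy
  subst hx
  simpa using hxy

namespace PeriodPair

lemma wp_lattice_eq_weierstrassP (L : PeriodPair) (z : ℂ) :
    wp L.lattice z = L.weierstrassP z := by
  rw [← L.weierstrassPExcept_add ⟨0, zero_mem _⟩, weierstrassPExcept, wp, add_comm]
  congr 1
  · refine ((Equiv.subtypeSubtypeEquivSubtypeInter (· ∈ (L.lattice : Set ℂ)) (· ≠ 0)).tsum_eq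
      _).symm.trans (.trans ?_ (tsum_subtype_eq_of_support_subset
        (s := {l : L.lattice | (l : ℂ) ≠ 0}) fun l hl ↦ by simp_all))
    exact tsum_congr fun l ↦ by simp [l.2]
  · simp

def ofIm {τ : ℂ} (hτ : τ.im ≠ 0) : PeriodPair :=
  ⟨τ, 1, linearIndependent_self_one_of_im_ne_zero hτ⟩

lemma coe_lattice_ofIm {τ : ℂ} (hτ : τ.im ≠ 0) : ((ofIm hτ).lattice : Set ℂ) = lat τ := by
  ext w
  simp [mem_lattice, ofIm, lat, eq_comm]

end PeriodPair

lemma wp_lat_add {τ : ℂ} (hτ : τ.im ≠ 0) (z : ℂ) (m n : ℤ) :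
    wp (lat τ) (z + (m * τ + n)) = wp (lat τ) z := by
  have hl : (m * τ + n : ℂ) ∈ (PeriodPair.ofIm hτ).lattice :=
    PeriodPair.mem_lattice.2 ⟨m, n, by simp [PeriodPair.ofIm]⟩
  rw [← PeriodPair.coe_lattice_ofIm hτ, PeriodPair.wp_lattice_eq_weierstrassP,
    PeriodPair.wp_lattice_eq_weierstrassP]
  exact PeriodPair.weierstrassP_add_coe _ z ⟨_, hl⟩

lemma smul_lat_moebius {τ : ℂ} {a b c d : ℤ} (hA : a * d - b * c = 1)
    (hcd : (c : ℂ) * τ + d ≠ 0) :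
    ((c : ℂ) * τ + d) • lat ((a * τ + b) / (c * τ + d)) = lat τ := by
  ext w
  simp only [Set.mem_smul_set, lat, Set.mem_ofPred_eq, smul_eq_mul]
  constructor
  · rintro ⟨_, ⟨m, n, rfl⟩, rfl⟩
    exact ⟨m * a + n * c, m * b + n * d, by push_cast; field_simp; ring⟩
  · rintro ⟨p, q, rfl⟩
    refine ⟨_, ⟨p * d - q * c, q * a - p * b, rfl⟩, ?_⟩
    have hA' : (a : ℂ) * d - b * c = 1 := by exact_mod_cast hA
    push_cast
    field_simp
    linear_combination (p * τ + q) * hA'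

lemma intCast_mul_add_intCast_ne_zero {τ : ℂ} (hτ : τ.im ≠ 0) {c d : ℤ} (hcd : c ≠ 0 ∨ d ≠ 0) :
    (c : ℂ) * τ + d ≠ 0 := by
  intro h
  have hc : c = 0 := by simpa [hτ] using congrArg Complex.im h
  subst hc
  simp_all

theorem f_slash_invariant_general (s t : ℚ)
    (a b c d : ℤ) (hA : a * d - b * c = 1)
    (hΓ : ∃ m n : ℤ, s * a + t * c - s = (m : ℚ) ∧ s * b + t * d - t = (n : ℚ)) :
    ∀ τ : ℂ, 0 < τ.im →
      ((c : ℂ) * τ + (d : ℂ)) ^ (-2 : ℤ) *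
          f s t (((a : ℂ) * τ + (b : ℂ)) / ((c : ℂ) * τ + (d : ℂ))) =
        f s t τ := by
  intro τ hτ
  obtain ⟨m, n, hm, hn⟩ := hΓ
  have hcd : (c : ℂ) * τ + d ≠ 0 := intCast_mul_add_intCast_ne_zero hτ.ne' <| by
    by_contra! h
    simp [h.1, h.2] at hA
  have hshift : ((c : ℂ) * τ + d) * (s * ((a * τ + b) / (c * τ + d)) + t) =
      (s * τ + t) + (m * τ + n) := by
    have hm' : (s : ℂ) * a + t * c - s = m := by exact_mod_cast hm
    have hn' : (s : ℂ) * b + t * d - t = n := by exact_mod_cast hn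
    field_simp
    linear_combination τ * hm' + hn'
  rw [f, f, zpow_neg, zpow_ofNat, ← wp_smul_s3 _ hcd, smul_lat_moebius hA hcd, hshift,
    wp_lat_add hτ.ne']

/-- for `(s,t) ∈ ℚ²∖ℤ²`, `f_{(s,t)} |₂ A = f_{(s,t)}` for every
`A = ((a,b),(c,d)) ∈ Γ_{(s,t)} = { A ∈ SL(2,ℤ) : (s,t)A − (s,t) ∈ ℤ² }`. -/
theorem f_slash_invariant (s t : ℚ) (hst : ¬ ∃ m n : ℤ, s = (m : ℚ) ∧ t = (n : ℚ))
    (a b c d : ℤ) (hA : a * d - b * c = 1)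
    (hΓ : ∃ m n : ℤ, s * a + t * c - s = (m : ℚ) ∧ s * b + t * d - t = (n : ℚ)) :
    ∀ τ : ℂ, 0 < τ.im →
      ((c : ℂ) * τ + (d : ℂ)) ^ (-2 : ℤ) *
          f s t (((a : ℂ) * τ + (b : ℂ)) / ((c : ℂ) * τ + (d : ℂ))) =
        f s t τ :=
  f_slash_invariant_general s t a b c d hA hΓ
end

section
/- Let k ≥ 3 be an integer and τ ∈ ℍ. Then ∑_{c ∈ ℤ∖{0}, d ∈ ℤ} 1/|cτ+d|^k < 4·ζ(k)/(Im τ)^k + 2π·ζ(k−1)/(Im τ)^{k−1}, where ζ denotes the Riemann zeta function. -/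
/-!
Write `cτ + d = (a + d) + i r` with `a = c Re τ` and `r = c Im τ`. For fixed `c ≠ 0` the row
`∑_d |cτ + d|^{-k}` is a sum of `f |a + d|` with `f x = (x² + r²)^{-k/2}` decreasing on `[0, ∞)`,
so it is at most `2 ∑_{n ≥ 0} f n`. The term `n = 0` is `|r|^{-k}`, and for `n ≥ 1`,
`f n < |r|^{1-k} · |r| / (n² + r²)` (strictly, as `k ≥ 3`); these last terms are dominated by the
increments of `arctan (x / |r|)`, so they sum to at most `π / 2`. Each row is therefore below
`2 / (|c| Im τ)^k + π / (|c| Im τ)^{k-1}`, and summing over `c = ±1, ±2, …` gives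
`4 ζ(k) / (Im τ)^k + 2π ζ(k-1) / (Im τ)^{k-1}`.
-/

open Real Set

lemma hasSum_one_div_nat_add_one_pow_riemannZeta_re {k : ℕ} (hk : 1 < k) :
    HasSum (fun n : ℕ => 1 / ((n : ℝ) + 1) ^ k) (riemannZeta k).re := by
  have hs : Summable (fun n : ℕ => 1 / ((n : ℝ) + 1) ^ k) := by
    simpa using (summable_nat_add_iff 1).2 (Real.summable_one_div_nat_pow.2 hk)
  convert hs.hasSum
  rw [zeta_eq_tsum_one_div_nat_add_one_cpow (by simpa using hk),
    ← Complex.ofReal_re (∑' n : ℕ, 1 / ((n : ℝ) + 1) ^ k), Complex.ofReal_tsum]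
  push_cast
  simp only [Complex.cpow_natCast]

lemma div_add_one_sq_add_sq_le_arctan_sub {r p : ℝ} (hr : 0 < r) (hp : 0 ≤ p) :
    r / ((p + 1) ^ 2 + r ^ 2) ≤ arctan ((p + 1) / r) - arctan (p / r) := by
  have hderiv (x : ℝ) : HasDerivAt (fun t => arctan (t / r)) (r / (x ^ 2 + r ^ 2)) x := by
    convert ((hasDerivAt_id' x).div_const r).arctan using 1
    field_simp
    ring
  have hmvt := (convex_Icc p (p + 1)).mul_sub_le_image_sub_of_le_deriv
    (fun x _ => (hderiv x).continuousAt.continuousWithinAt)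
    (fun x _ => (hderiv x).differentiableAt.differentiableWithinAt)
    (C := r / ((p + 1) ^ 2 + r ^ 2)) ?_ p (by simp) (p + 1) (by simp) (by linarith)
  · simpa using hmvt
  · intro x hx
    rw [interior_Icc] at hx
    rw [(hderiv x).deriv]
    obtain ⟨hpx, hxp⟩ := hx
    gcongr
    linarith

lemma sum_range_div_add_one_sq_add_sq_le_pi_div_two {r : ℝ} (hr : 0 < r) (N : ℕ) :
    ∑ i ∈ Finset.range N, r / (((i : ℝ) + 1) ^ 2 + r ^ 2) ≤ π / 2 :=
  calc ∑ i ∈ Finset.range N, r / (((i : ℝ) + 1) ^ 2 + r ^ 2)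
      ≤ ∑ i ∈ Finset.range N, (arctan (((i + 1 : ℕ) : ℝ) / r) - arctan ((i : ℝ) / r)) :=
        Finset.sum_le_sum fun i _ => by
          simpa using div_add_one_sq_add_sq_le_arctan_sub hr i.cast_nonneg
    _ = arctan (N / r) := by
      rw [Finset.sum_range_sub (fun i : ℕ => arctan ((i : ℝ) / r))]
      simp
    _ ≤ π / 2 := (arctan_lt_pi_div_two _).le

lemma antitoneOn_one_div_sqrt_sq_add_sq_pow (k : ℕ) {r : ℝ} (hr : 0 < r) :
    AntitoneOn (fun x : ℝ => 1 / √(x ^ 2 + r ^ 2) ^ k) (Ici 0) := by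
  intro x hx y hy hxy
  simp only [mem_Ici] at hx hy
  dsimp only
  gcongr

lemma one_div_sqrt_sq_add_sq_pow_lt {k : ℕ} (hk : 3 ≤ k) {r m : ℝ} (hr : 0 < r) (hm : m ≠ 0) :
    1 / √(m ^ 2 + r ^ 2) ^ k < r / (m ^ 2 + r ^ 2) / r ^ (k - 1) := by
  set s := √(m ^ 2 + r ^ 2)
  have hs : s ^ 2 = m ^ 2 + r ^ 2 := sq_sqrt (by positivity)
  have hrs : r < s := lt_sqrt_of_sq_lt (lt_add_of_pos_left _ (by positivity))
  obtain ⟨j, rfl⟩ : ∃ j, k = j + 3 := ⟨k - 3, by omega⟩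
  calc 1 / s ^ (j + 3) = 1 / (s ^ 2 * s ^ (j + 1)) := by ring
    _ < 1 / (s ^ 2 * r ^ (j + 1)) := by gcongr
    _ = r / (m ^ 2 + r ^ 2) / r ^ (j + 3 - 1) := by
      rw [← hs, show j + 3 - 1 = j + 2 by omega]
      field_simp
      ring

lemma summable_and_tsum_one_div_sqrt_sq_add_sq_pow_lt {k : ℕ} (hk : 3 ≤ k) {r : ℝ} (hr : 0 < r) :
    Summable (fun n : ℕ => 1 / √((n : ℝ) ^ 2 + r ^ 2) ^ k) ∧
      ∑' n : ℕ, 1 / √((n : ℝ) ^ 2 + r ^ 2) ^ k < 1 / r ^ k + π / 2 / r ^ (k - 1) := by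
  set g : ℕ → ℝ := fun n => r / (((n : ℝ) + 1) ^ 2 + r ^ 2)
  have hg0 (n : ℕ) : 0 ≤ g n := by positivity
  have hg : Summable g :=
    summable_of_sum_range_le hg0 (sum_range_div_add_one_sq_add_sq_le_pi_div_two hr)
  have hg_le : ∑' n, g n ≤ π / 2 :=
    Real.tsum_le_of_sum_range_le hg0 (sum_range_div_add_one_sq_add_sq_le_pi_div_two hr)
  have hlt (n : ℕ) : 1 / √(((n + 1 : ℕ) : ℝ) ^ 2 + r ^ 2) ^ k < g n / r ^ (k - 1) := by
    push_cast
    exact one_div_sqrt_sq_add_sq_pow_lt hk hr (by positivity)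
  have htail : Summable (fun n : ℕ => 1 / √(((n + 1 : ℕ) : ℝ) ^ 2 + r ^ 2) ^ k) :=
    (hg.div_const _).of_nonneg_of_le (fun n => by positivity) (fun n => (hlt n).le)
  have hs := (summable_nat_add_iff (f := fun n : ℕ => 1 / √((n : ℝ) ^ 2 + r ^ 2) ^ k) 1).1 htail
  refine ⟨hs, ?_⟩
  calc ∑' n : ℕ, 1 / √((n : ℝ) ^ 2 + r ^ 2) ^ k
      = 1 / r ^ k + ∑' n : ℕ, 1 / √(((n + 1 : ℕ) : ℝ) ^ 2 + r ^ 2) ^ k := by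
        rw [hs.tsum_eq_zero_add]
        simp [sqrt_sq hr.le]
    _ < 1 / r ^ k + ∑' n, g n / r ^ (k - 1) := by
        gcongr
        exact htail.tsum_lt_tsum (fun n => (hlt n).le) (hlt 0) (hg.div_const _)
    _ ≤ 1 / r ^ k + π / 2 / r ^ (k - 1) := by
        rw [tsum_div_const]
        gcongr

lemma summable_and_tsum_int_le_of_antitoneOn {f : ℝ → ℝ} (hf0 : ∀ x, 0 ≤ f x)
    (hf : AntitoneOn f (Ici 0)) (hs : Summable (fun n : ℕ => f n)) (a : ℝ) :
    Summable (fun d : ℤ => f |a + d|) ∧ ∑' d : ℤ, f |a + d| ≤ 2 * ∑' n : ℕ, f n := by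
  have hle (x : ℝ) (n : ℕ) (h : (n : ℝ) ≤ |x|) : f |x| ≤ f n :=
    hf (mem_Ici.2 n.cast_nonneg) (mem_Ici.2 (abs_nonneg x)) h
  -- After shifting by `⌊a⌋`, the terms at `j = n` and `j = -(n + 1)` have `|fract a + j| ≥ n`.
  set g : ℤ → ℝ := fun j => f |Int.fract a + j|
  have hshift : (fun d : ℤ => f |a + d|) ∘ Equiv.subRight ⌊a⌋ = g := by
    ext j
    simp only [Function.comp_apply, Equiv.subRight_apply, Int.cast_sub, g, Int.fract]
    ring_nf
  have hpos (n : ℕ) : g n ≤ f n :=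
    hle _ _ (by rw [abs_of_nonneg (by positivity)]; push_cast; linarith [Int.fract_nonneg a])
  have hneg (n : ℕ) : g (-(n + 1)) ≤ f n := by
    have := Int.fract_lt_one a
    exact hle _ _ (by rw [abs_of_neg (by push_cast; linarith)]; push_cast; linarith)
  have hs₁ : Summable fun n : ℕ => g n := hs.of_nonneg_of_le (fun _ => hf0 _) hpos
  have hs₂ : Summable fun n : ℕ => g (-(n + 1)) := hs.of_nonneg_of_le (fun _ => hf0 _) hneg
  have hg : Summable g := Summable.of_nat_of_neg_add_one (f := g) hs₁ hs₂
  refine ⟨(Equiv.subRight ⌊a⌋).summable_iff.1 (hshift ▸ hg), ?_⟩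
  calc ∑' d : ℤ, f |a + d| = ∑' j, g j := by rw [← (Equiv.subRight ⌊a⌋).tsum_eq, ← hshift]; rfl
    _ = ∑' n : ℕ, g n + ∑' n : ℕ, g (-(n + 1)) := tsum_of_nat_of_neg_add_one (f := g) hs₁ hs₂
    _ ≤ 2 * ∑' n : ℕ, f n := by
        rw [two_mul]
        exact add_le_add (hs₁.tsum_le_tsum hpos hs) (hs₂.tsum_le_tsum hneg hs)

lemma summable_and_tsum_one_div_norm_add_intCast_pow_lt {k : ℕ} (hk : 3 ≤ k) {z : ℂ}
    (hz : z.im ≠ 0) :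
    Summable (fun d : ℤ => 1 / ‖z + d‖ ^ k) ∧
      ∑' d : ℤ, 1 / ‖z + d‖ ^ k < 2 / |z.im| ^ k + π / |z.im| ^ (k - 1) := by
  set r := |z.im|
  have hr : 0 < r := abs_pos.2 hz
  have hnorm (d : ℤ) : 1 / ‖z + d‖ ^ k = 1 / √(|z.re + d| ^ 2 + r ^ 2) ^ k := by
    simp [Complex.norm_eq_sqrt_sq_add_sq, r]
  obtain ⟨hsum, hlt⟩ := summable_and_tsum_one_div_sqrt_sq_add_sq_pow_lt hk hr
  obtain ⟨hsum', hle⟩ := summable_and_tsum_int_le_of_antitoneOn (fun _ => by positivity)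
    (antitoneOn_one_div_sqrt_sq_add_sq_pow k hr) hsum z.re
  simp only [hnorm]
  refine ⟨hsum', ?_⟩
  calc _ ≤ _ := hle
    _ < 2 * (1 / r ^ k + π / 2 / r ^ (k - 1)) := by gcongr
    _ = 2 / r ^ k + π / r ^ (k - 1) := by ring

lemma summable_and_tsum_prod_lt_of_tsum_row_lt {F : ℤ × ℤ → ℝ} (hF : 0 ≤ F)
    (hrow : ∀ c, Summable fun d => F (c, d)) (h0 : ∑' d, F (0, d) = 0) {b : ℝ → ℝ}
    (hb : Summable fun n : ℕ => b (n + 1)) (hlt : ∀ c ≠ 0, ∑' d, F (c, d) < b |(c : ℝ)|) :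
    Summable F ∧ ∑' p, F p < 2 * ∑' n : ℕ, b (n + 1) := by
  set T : ℤ → ℝ := fun c => ∑' d, F (c, d)
  have hT0 (c : ℤ) : 0 ≤ T c := tsum_nonneg fun d => hF _
  have hpos (n : ℕ) : T (n + 1) < b (n + 1) := by
    simpa [abs_of_nonneg (by positivity : (0 : ℝ) ≤ n + 1)] using hlt (n + 1) (by omega)
  have hneg (n : ℕ) : T (-(n + 1)) < b (n + 1) := by
    have h := hlt (-(n + 1)) (by omega)
    push_cast at h
    rwa [abs_neg, abs_of_nonneg (by positivity)] at h
  have hs₁ : Summable fun n : ℕ => T (n + 1) :=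
    hb.of_nonneg_of_le (fun n => hT0 _) (fun n => (hpos n).le)
  have hs₂ : Summable fun n : ℕ => T (-(n + 1)) :=
    hb.of_nonneg_of_le (fun n => hT0 _) (fun n => (hneg n).le)
  have hFs : Summable F :=
    (summable_prod_of_nonneg hF).2 ⟨hrow, Summable.of_add_one_of_neg_add_one (f := T) hs₁ hs₂⟩
  refine ⟨hFs, ?_⟩
  calc ∑' p, F p = ∑' c, T c := hFs.tsum_prod' hrow
    _ = ∑' n : ℕ, T (n + 1) + T 0 + ∑' n : ℕ, T (-(n + 1)) :=
        tsum_of_add_one_of_neg_add_one (f := T) hs₁ hs₂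
    _ < ∑' n : ℕ, b (n + 1) + 0 + ∑' n : ℕ, b (n + 1) := by
        rw [show T 0 = 0 from h0]
        gcongr ?_ + _ + ?_
        · exact hs₁.tsum_lt_tsum (fun n => (hpos n).le) (hpos 0) hb
        · exact hs₂.tsum_lt_tsum (fun n => (hneg n).le) (hneg 0) hb
    _ = 2 * ∑' n : ℕ, b (n + 1) := by ring

lemma hasSum_two_div_pow_add_pi_div_pow {k : ℕ} (hk : 3 ≤ k) (y : ℝ) :
    HasSum (fun n : ℕ => 2 / (((n : ℝ) + 1) * y) ^ k + π / (((n : ℝ) + 1) * y) ^ (k - 1))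
      (2 * (riemannZeta k).re / y ^ k + π * (riemannZeta (k - 1 : ℕ)).re / y ^ (k - 1)) := by
  have hterm (n : ℕ) : 2 / (((n : ℝ) + 1) * y) ^ k + π / (((n : ℝ) + 1) * y) ^ (k - 1) =
      2 / y ^ k * (1 / ((n : ℝ) + 1) ^ k) + π / y ^ (k - 1) * (1 / ((n : ℝ) + 1) ^ (k - 1)) := by
    rw [mul_pow, mul_pow]
    field_simp
  simp only [hterm]
  rw [mul_div_right_comm, mul_div_right_comm π]
  exact ((hasSum_one_div_nat_add_one_pow_riemannZeta_re (by omega)).mul_left _).add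
    ((hasSum_one_div_nat_add_one_pow_riemannZeta_re (by omega)).mul_left _)

/-- for an integer `k ≥ 3` and `τ ∈ ℍ`,
`∑_{c ∈ ℤ∖{0}, d ∈ ℤ} 1/|cτ+d|^k < 4·ζ(k)/(Im τ)^k + 2π·ζ(k−1)/(Im τ)^{k−1}`,
with `ζ` the Riemann zeta function (whose values at real arguments are real, so we take
real parts); the sum on the left converges. -/
theorem eisenstein_tail_bound (k : ℕ) (hk : 3 ≤ k) (τ : ℂ) (hτ : 0 < τ.im) :
    Summable (fun p : {p : ℤ × ℤ // p.1 ≠ 0} =>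
      1 / ‖((p : ℤ × ℤ).1 : ℂ) * τ + ((p : ℤ × ℤ).2 : ℂ)‖ ^ k) ∧
    (∑' p : {p : ℤ × ℤ // p.1 ≠ 0},
        1 / ‖((p : ℤ × ℤ).1 : ℂ) * τ + ((p : ℤ × ℤ).2 : ℂ)‖ ^ k) <
      4 * (riemannZeta (k : ℂ)).re / τ.im ^ k +
        2 * Real.pi * (riemannZeta ((k - 1 : ℕ) : ℂ)).re / τ.im ^ (k - 1) := by
  set s : Set (ℤ × ℤ) := {p | p.1 ≠ 0}
  set f : ℤ × ℤ → ℝ := fun p => 1 / ‖(p.1 : ℂ) * τ + p.2‖ ^ k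
  have hrow (c : ℤ) (hc : c ≠ 0) :
      Summable (fun d => s.indicator f (c, d)) ∧ ∑' d, s.indicator f (c, d) <
        2 / (|(c : ℝ)| * τ.im) ^ k + π / (|(c : ℝ)| * τ.im) ^ (k - 1) := by
    have hz : ((c : ℂ) * τ).im = c * τ.im := by simp
    simpa [s, f, indicator_of_mem, hc, hz, abs_mul, abs_of_pos hτ] using
      summable_and_tsum_one_div_norm_add_intCast_pow_lt hk (z := c * τ) (by simp [hc, hτ.ne'])
  have hzero (d : ℤ) : s.indicator f (0, d) = 0 := indicator_of_notMem (by simp [s]) f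
  obtain ⟨hsum, hlt⟩ := summable_and_tsum_prod_lt_of_tsum_row_lt (F := s.indicator f)
    (b := fun t => 2 / (t * τ.im) ^ k + π / (t * τ.im) ^ (k - 1))
    (indicator_nonneg fun p _ => by positivity)
    (fun c => by
      rcases eq_or_ne c 0 with rfl | hc
      · simp [hzero]
      · exact (hrow c hc).1)
    (by simp [hzero]) (hasSum_two_div_pow_add_pi_div_pow hk τ.im).summable
    (fun c hc => (hrow c hc).2)
  refine ⟨(summable_subtype_iff_indicator (f := f) (s := s)).2 hsum, ?_⟩
  calc _ = ∑' p, s.indicator f p := tsum_subtype s f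
    _ < _ := hlt
    _ = _ := by rw [(hasSum_two_div_pow_add_pi_div_pow hk τ.im).tsum_eq]; ring
end

section
/- Let (s,t) ∈ ℚ²∖ℤ² with 0 ≤ s < 1 and 0 ≤ t < 1, and let L be a positive integer with Ls, Lt ∈ ℤ. Write z(τ) := sτ+t and ω_{c,d}(τ) := cτ+d. Define f*_{(s,t)}(τ) := ∑_{c ∈ ℤ∖{0}, d ∈ ℤ} ((2 − z(τ)/ω_{c,d}(τ))·z(τ) / (1 − z(τ)/ω_{c,d}(τ))²)·(1/ω_{c,d}(τ)³). Then f*_{(s,t)}(τ) → 0 as Im τ → ∞ subject to |Re τ| ≤ L. -/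
/-- The tail `f*_{(s,t)}(τ) = ∑_{c ≠ 0, d ∈ ℤ}
`((2 − z/ω)·z / (1 − z/ω)²)·(1/ω³)` with `z = sτ+t`, `ω = cτ+d`. -/
noncomputable def fstar (s t : ℚ) (τ : ℂ) : ℂ :=
  ∑' p : {p : ℤ × ℤ // p.1 ≠ 0},
    ((2 - ((s : ℂ) * τ + t) / (((p : ℤ × ℤ).1 : ℂ) * τ + ((p : ℤ × ℤ).2 : ℂ))) *
        ((s : ℂ) * τ + t) /
        (1 - ((s : ℂ) * τ + t) / (((p : ℤ × ℤ).1 : ℂ) * τ + ((p : ℤ × ℤ).2 : ℂ))) ^ 2) *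
      (1 / (((p : ℤ × ℤ).1 : ℂ) * τ + ((p : ℤ × ℤ).2 : ℂ)) ^ 3)

open Filter

/-!
Once `Im τ` is large and `Re τ` bounded, `z = sτ + t` satisfies `|z| ≤ r·Im τ ≤ r|cτ+d|`
for some `r < 1` (because `s < 1`), so each summand is `O(|z| / |cτ+d|³)`. The estimate
`|cτ+d|² ≥ |c|·max(1,|d|)·Im τ` then bounds `|cτ+d|⁻³` by `(Im τ)^{-3/2}` times the summable weight
`|c|^{-3/2} max(1,|d|)^{-3/2}`, and `|z| ≤ Im τ` leaves a total of order `(Im τ)^{-1/2}`.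
-/

/-- The summand of `fstar`, with `z = sτ + t` and `ω = cτ + d`. -/
noncomputable def fstarTerm (z ω : ℂ) : ℂ := (2 - z / ω) * z / (1 - z / ω) ^ 2 * (1 / ω ^ 3)

lemma norm_fstarTerm_le {z ω : ℂ} {r : ℝ} (hr : r < 1) (h : ‖z / ω‖ ≤ r) :
    ‖fstarTerm z ω‖ ≤ (2 + r) / (1 - r) ^ 2 * (‖z‖ / ‖ω‖ ^ 3) := by
  have hnum : ‖2 - z / ω‖ ≤ 2 + r :=
    (norm_sub_le _ _).trans (by rw [Complex.norm_ofNat]; linarith)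
  have hden : 1 - r ≤ ‖1 - z / ω‖ := by
    have := norm_sub_norm_le (1 : ℂ) (z / ω); rw [norm_one] at this; linarith
  have hden2 : (1 - r) ^ 2 ≤ ‖1 - z / ω‖ ^ 2 := pow_le_pow_left₀ (by linarith) hden 2
  calc ‖fstarTerm z ω‖ = ‖2 - z / ω‖ / ‖1 - z / ω‖ ^ 2 * (‖z‖ / ‖ω‖ ^ 3) := by
        simp only [fstarTerm, norm_mul, norm_div, norm_pow, norm_one]; ring
    _ ≤ (2 + r) / (1 - r) ^ 2 * (‖z‖ / ‖ω‖ ^ 3) := by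
        gcongr
        linarith [norm_nonneg (2 - z / ω)]

lemma summable_max_one_abs_rpow_neg {b : ℝ} (hb : 1 < b) :
    Summable fun d : ℤ => (max 1 |(d : ℝ)|) ^ (-b) := by
  classical
  refine ((Real.summable_abs_int_rpow hb).update 0 1).congr fun d => ?_
  rcases eq_or_ne d 0 with rfl | hd
  · simp
  · have : 1 ≤ |(d : ℝ)| := by exact_mod_cast Int.one_le_abs hd
    simp [hd, max_eq_right this]

lemma mul_abs_le_sq_add_sq {a e D : ℝ} (he : 2 * |e| ≤ a) :
    a * |D| ≤ (e + D) ^ 2 + a ^ 2 := by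
  have ha : 0 ≤ a := by linarith [abs_nonneg e]
  rcases le_total |D| a with hDa | haD
  · nlinarith [sq_nonneg (e + D)]
  · have h : |D| - |e| ≤ |e + D| := by
      have := abs_sub_abs_le_abs_sub D (-e); rwa [abs_neg, sub_neg_eq_add, add_comm] at this
    have h' : (|D| - |e|) ^ 2 ≤ (e + D) ^ 2 := by
      rw [← sq_abs (e + D)]; exact pow_le_pow_left₀ (by linarith) h 2
    nlinarith [sq_nonneg (|D| - a)]

lemma abs_mul_max_mul_im_le_norm_sq {τ : ℂ} (hy : 1 ≤ τ.im) (hre : 2 * |τ.re| ≤ τ.im)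
    {c : ℤ} (hc : c ≠ 0) (d : ℤ) :
    τ.im * (|(c : ℝ)| * max 1 |(d : ℝ)|) ≤ ‖(c : ℂ) * τ + d‖ ^ 2 := by
  have hc1 : 1 ≤ |(c : ℝ)| := by exact_mod_cast Int.one_le_abs hc
  have hnorm : ‖(c : ℂ) * τ + d‖ ^ 2 = (c * τ.re + d) ^ 2 + (|(c : ℝ)| * τ.im) ^ 2 := by
    simp only [Complex.sq_norm, Complex.normSq_apply, mul_pow, sq_abs, Complex.add_re,
      Complex.mul_re, Complex.add_im, Complex.mul_im, Complex.intCast_re, Complex.intCast_im,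
      zero_mul, sub_zero, add_zero]
    ring
  have ha : 1 ≤ |(c : ℝ)| * τ.im := one_le_mul_of_one_le_of_one_le hc1 hy
  have he : 2 * |c * τ.re| ≤ |(c : ℝ)| * τ.im := by
    rw [abs_mul]; nlinarith [abs_nonneg τ.re]
  rw [hnorm, ← mul_assoc, mul_comm τ.im, mul_max_of_nonneg _ _ (by linarith), mul_one]
  refine max_le (by nlinarith [sq_nonneg ((c:ℝ) * τ.re + d)]) ?_
  exact mul_abs_le_sq_add_sq he

lemma inv_norm_pow_three_le {τ : ℂ} (hy : 1 ≤ τ.im) (hre : 2 * |τ.re| ≤ τ.im)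
    {c : ℤ} (hc : c ≠ 0) (d : ℤ) :
    (‖(c : ℂ) * τ + d‖ ^ 3)⁻¹ ≤
      τ.im ^ (-(3 / 2 : ℝ)) * (|(c : ℝ)| ^ (-(3 / 2 : ℝ)) * max 1 |(d : ℝ)| ^ (-(3 / 2 : ℝ))) := by
  have hA : 0 < τ.im * (|(c : ℝ)| * max 1 |(d : ℝ)|) := by positivity
  have hcube : (‖(c : ℂ) * τ + d‖ ^ 3)⁻¹ = (‖(c : ℂ) * τ + d‖ ^ 2) ^ (-(3 / 2 : ℝ)) := by
    rw [← Real.rpow_natCast _ 2, ← Real.rpow_mul (norm_nonneg _),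
      show ((2 : ℕ) : ℝ) * -(3 / 2) = -((3 : ℕ) : ℝ) by norm_num, Real.rpow_neg (norm_nonneg _),
      Real.rpow_natCast]
  rw [hcube, ← Real.mul_rpow (by positivity) (by positivity),
    ← Real.mul_rpow (by positivity) (by positivity)]
  exact Real.rpow_le_rpow_of_nonpos hA (abs_mul_max_mul_im_le_norm_sq hy hre hc d) (by norm_num)

lemma im_le_norm_int_mul_add {τ : ℂ} (hy : 0 ≤ τ.im) {c : ℤ} (hc : c ≠ 0) (d : ℤ) :
    τ.im ≤ ‖(c : ℂ) * τ + d‖ := by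
  have hc1 : 1 ≤ |(c : ℝ)| := by exact_mod_cast Int.one_le_abs hc
  have h := Complex.abs_im_le_norm ((c : ℂ) * τ + d)
  simp only [Complex.add_im, Complex.mul_im, Complex.intCast_re, Complex.intCast_im, zero_mul,
    add_zero, abs_mul, abs_of_nonneg hy] at h
  nlinarith

lemma exists_norm_tsum_fstarTerm_le {r : ℝ} (hr0 : 0 ≤ r) (hr1 : r < 1) :
    ∃ C, ∀ τ z : ℂ, 1 ≤ τ.im → 2 * |τ.re| ≤ τ.im → ‖z‖ ≤ r * τ.im →
      ‖∑' p : {p : ℤ × ℤ // p.1 ≠ 0}, fstarTerm z (p.1.1 * τ + p.1.2)‖ ≤ C / √τ.im := by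
  set w : {p : ℤ × ℤ // p.1 ≠ 0} → ℝ :=
    fun p => |(p.1.1 : ℝ)| ^ (-(3 / 2 : ℝ)) * max 1 |(p.1.2 : ℝ)| ^ (-(3 / 2 : ℝ))
  have hw : Summable w :=
    ((Real.summable_abs_int_rpow (by norm_num)).mul_of_nonneg
      (summable_max_one_abs_rpow_neg (by norm_num)) (fun _ => by positivity)
      (fun _ => by positivity)).subtype _
  set K := (2 + r) / (1 - r) ^ 2
  refine ⟨K * r * ∑' p, w p, fun τ z hy hre hz => ?_⟩
  have hy0 : 0 < τ.im := by linarith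
  have hdecay : τ.im * τ.im ^ (-(3 / 2 : ℝ)) = (√τ.im)⁻¹ := by
    rw [Real.sqrt_eq_rpow, ← Real.rpow_neg hy0.le, ← Real.rpow_one_add' hy0.le (by norm_num)]
    norm_num
  calc _ ≤ K * r * (√τ.im)⁻¹ * ∑' p, w p := tsum_of_norm_bounded (hw.hasSum.mul_left _) ?_
    _ = K * r * (∑' p, w p) / √τ.im := by ring
  rintro ⟨⟨c, d⟩, hc⟩
  have hω := im_le_norm_int_mul_add hy0.le hc d
  have hzω : ‖z / ((c : ℂ) * τ + d)‖ ≤ r := by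
    rw [norm_div, div_le_iff₀ (hy0.trans_le hω)]
    exact hz.trans (mul_le_mul_of_nonneg_left hω hr0)
  calc _ ≤ K * (‖z‖ / ‖(c : ℂ) * τ + d‖ ^ 3) := norm_fstarTerm_le hr1 hzω
    _ ≤ K * (r * τ.im * (τ.im ^ (-(3 / 2 : ℝ)) * w ⟨(c, d), hc⟩)) := by
      rw [div_eq_mul_inv]
      gcongr
      exact inv_norm_pow_three_le hy hre hc d
    _ = K * r * (√τ.im)⁻¹ * w ⟨(c, d), hc⟩ := by rw [← hdecay]; ring

lemma exists_norm_mul_add_le {s : ℂ} (hs : ‖s‖ < 1) (t : ℂ) (L : ℝ) :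
    ∃ M, ∀ τ : ℂ, |τ.re| ≤ L → M ≤ τ.im → ‖s * τ + t‖ ≤ (1 + ‖s‖) / 2 * τ.im := by
  refine ⟨2 * (‖s‖ * L + ‖t‖) / (1 - ‖s‖), fun τ hre him => ?_⟩
  rw [div_le_iff₀' (by linarith)] at him
  have hL : 0 ≤ L := (abs_nonneg _).trans hre
  have hy : 0 ≤ τ.im := by nlinarith [norm_nonneg s, norm_nonneg t]
  have hτ : ‖τ‖ ≤ L + τ.im := by
    linarith [Complex.norm_le_abs_re_add_abs_im τ, abs_of_nonneg hy]
  calc ‖s * τ + t‖ ≤ ‖s‖ * ‖τ‖ + ‖t‖ := (norm_add_le _ _).trans_eq (by rw [norm_mul])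
    _ ≤ ‖s‖ * (L + τ.im) + ‖t‖ := by gcongr
    _ ≤ (1 + ‖s‖) / 2 * τ.im := by linarith

theorem fstar_tendsto_zero_general (s t : ℚ)
    (hs0 : 0 ≤ s) (hs1 : s < 1)
    (L : ℕ) :
    ∀ ε : ℝ, 0 < ε → ∃ M : ℝ, ∀ τ : ℂ, |τ.re| ≤ (L : ℝ) → M ≤ τ.im →
      ‖fstar s t τ‖ < ε := by
  intro ε hε
  have hs : ‖(s : ℂ)‖ < 1 := by
    rw [Complex.norm_ratCast, abs_of_nonneg (by exact_mod_cast hs0)]; exact_mod_cast hs1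
  obtain ⟨M₁, hz⟩ := exists_norm_mul_add_le hs (t : ℂ) L
  obtain ⟨C, hC⟩ :=
    exists_norm_tsum_fstarTerm_le (r := (1 + ‖(s : ℂ)‖) / 2) (by positivity) (by linarith)
  have hsmall : ∀ᶠ y : ℝ in atTop, C / √y < ε :=
    (tendsto_const_nhds.div_atTop Real.tendsto_sqrt_atTop).eventually (gt_mem_nhds hε)
  obtain ⟨M₂, hM₂⟩ := eventually_atTop.1 hsmall
  refine ⟨max (max M₁ M₂) (max 1 (2 * L)), fun τ hre him => ?_⟩
  simp only [max_le_iff] at him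
  exact (hC τ _ him.2.1 (by linarith) (hz τ hre him.1.1)).trans_lt (hM₂ _ him.1.2)

/-- for `(s,t) ∈ ℚ²∖ℤ²` with `0 ≤ s < 1`, `0 ≤ t < 1` and `L` a positive
common denominator of `s,t`, `f*_{(s,t)}(τ) → 0` as `Im τ → ∞` subject to `|Re τ| ≤ L`. -/
theorem fstar_tendsto_zero (s t : ℚ) (hst : ¬ ∃ m n : ℤ, s = (m : ℚ) ∧ t = (n : ℚ))
    (hs0 : 0 ≤ s) (hs1 : s < 1) (ht0 : 0 ≤ t) (ht1 : t < 1)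
    (L : ℕ) (hL : 0 < L) (hLs : ∃ m : ℤ, (L : ℚ) * s = (m : ℚ))
    (hLt : ∃ n : ℤ, (L : ℚ) * t = (n : ℚ)) :
    ∀ ε : ℝ, 0 < ε → ∃ M : ℝ, ∀ τ : ℂ, |τ.re| ≤ (L : ℝ) → M ≤ τ.im →
      ‖fstar s t τ‖ < ε :=
  fstar_tendsto_zero_general s t hs0 hs1 L
end

section
/- Fix a lattice Ω ⊂ ℂ and a point z ∈ ℂ with z ∉ Ω. Then the family (1/(z−ω) + 1/ω + z/ω²), indexed by ω ∈ Ω∖{0}, is absolutely summable; consequently the Weierstrass ζ-function ζ(Ω,z) := 1/z + ∑_{ω ∈ Ω∖{0}} (1/(z−ω) + 1/ω + z/ω²) is well defined for all z ∉ Ω. -/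
/-- The Weierstrass ζ-function attached to a set `Ω ⊂ ℂ`. -/
noncomputable def wzeta (Ω : Set ℂ) (z : ℂ) : ℂ :=
  1 / z + ∑' ω : {w : ℂ // w ∈ Ω ∧ w ≠ 0},
    (1 / (z - (ω : ℂ)) + 1 / (ω : ℂ) + z / (ω : ℂ) ^ 2)

open Filter

lemma one_div_sub_add_one_div_add_div_sq {𝕜 : Type*} [Field 𝕜] {z w : 𝕜} (hw : w ≠ 0)
    (hwz : w ≠ z) : 1 / (z - w) + 1 / w + z / w ^ 2 = -z ^ 2 / ((w - z) * w ^ 2) := by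
  have hzw : z - w ≠ 0 := sub_ne_zero.mpr hwz.symm
  have hwz' : w - z ≠ 0 := sub_ne_zero.mpr hwz
  field_simp
  ring

lemma norm_one_div_sub_add_one_div_add_div_sq_le {𝕜 : Type*} [NormedField 𝕜] {z w : 𝕜}
    (h : 2 * ‖z‖ < ‖w‖) : ‖1 / (z - w) + 1 / w + z / w ^ 2‖ ≤ 2 * ‖z‖ ^ 2 * ‖w‖⁻¹ ^ 3 := by
  have hw : 0 < ‖w‖ := (mul_nonneg zero_le_two (norm_nonneg z)).trans_lt h
  have hdist : ‖w‖ / 2 ≤ ‖w - z‖ := by linarith [norm_sub_norm_le w z]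
  have hwz : w ≠ z := by rintro rfl; linarith [norm_nonneg w]
  rw [one_div_sub_add_one_div_add_div_sq (norm_pos_iff.mp hw) hwz]
  calc ‖-z ^ 2 / ((w - z) * w ^ 2)‖ = ‖z‖ ^ 2 / (‖w - z‖ * ‖w‖ ^ 2) := by simp
    _ ≤ ‖z‖ ^ 2 / (‖w‖ / 2 * ‖w‖ ^ 2) := by gcongr
    _ = 2 * ‖z‖ ^ 2 * ‖w‖⁻¹ ^ 3 := by field_simp

namespace PeriodPair

lemma summable_norm_one_div_sub_add_one_div_add_div_sq (L : PeriodPair) (z : ℂ) :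
    Summable fun l : L.lattice ↦ ‖1 / (z - l) + 1 / (l : ℂ) + z / (l : ℂ) ^ 2‖ := by
  have hlarge : ∀ᶠ l : L.lattice in cofinite, 2 * ‖z‖ < ‖(l : ℂ)‖ := by
    rw [← cocompact_eq_cofinite]
    exact tendsto_norm_cocompact_atTop.eventually_gt_atTop _
  refine .of_norm_bounded_eventually
    ((ZLattice.summable_norm_pow_inv L.lattice 3 (by simp)).mul_left (2 * ‖z‖ ^ 2)) ?_
  filter_upwards [hlarge] with l hl
  rw [norm_norm]
  exact norm_one_div_sub_add_one_div_add_div_sq_le hl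

end PeriodPair

lemma mem_lattice_iff_mem_periodPair_lattice {ω₁ ω₂ w : ℂ}
    (hindep : LinearIndependent ℝ ![ω₁, ω₂]) :
    w ∈ lattice ω₁ ω₂ ↔ w ∈ (PeriodPair.mk ω₁ ω₂ hindep).lattice := by
  simp [lattice, PeriodPair.mem_lattice, eq_comm]

theorem weierstrass_zeta_summable_general (ω₁ ω₂ : ℂ) (hindep : LinearIndependent ℝ ![ω₁, ω₂])
    (z : ℂ) :
    Summable (fun ω : {w : ℂ // w ∈ lattice ω₁ ω₂ ∧ w ≠ 0} =>
      ‖1 / (z - (ω : ℂ)) + 1 / (ω : ℂ) + z / (ω : ℂ) ^ 2‖) := by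
  let L : PeriodPair := ⟨ω₁, ω₂, hindep⟩
  let toLattice (ω : {w : ℂ // w ∈ lattice ω₁ ω₂ ∧ w ≠ 0}) : L.lattice :=
    ⟨ω, (mem_lattice_iff_mem_periodPair_lattice hindep).mp ω.2.1⟩
  have hinj : Function.Injective toLattice := fun ω ω' h ↦
    Subtype.ext (congrArg Subtype.val h :)
  have hsummable := (L.summable_norm_one_div_sub_add_one_div_add_div_sq z).comp_injective hinj
  exact hsummable

/-- for a lattice `Ω` and `z ∉ Ω`, the family
`(1/(z−ω) + 1/ω + z/ω²)_{ω ∈ Ω∖{0}}` is absolutely summable, so that the Weierstrass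
ζ-function `ζ(Ω,z) = 1/z + ∑_{ω ∈ Ω∖{0}} (1/(z−ω) + 1/ω + z/ω²)` is well defined. -/
theorem weierstrass_zeta_summable (ω₁ ω₂ : ℂ) (hindep : LinearIndependent ℝ ![ω₁, ω₂])
    (z : ℂ) (hz : z ∉ lattice ω₁ ω₂) :
    Summable (fun ω : {w : ℂ // w ∈ lattice ω₁ ω₂ ∧ w ≠ 0} =>
      ‖1 / (z - (ω : ℂ)) + 1 / (ω : ℂ) + z / (ω : ℂ) ^ 2‖) :=
  weierstrass_zeta_summable_general ω₁ ω₂ hindep z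
end

section
/- Let (s,t) ∈ ℚ²∖ℤ². For every A = ((a,b),(c,d)) ∈ SL(2,ℤ) and every τ ∈ ℍ one has (g_{(s,t)} |₁ A)(τ) := (cτ+d)^{-1} · g_{(s,t)}((aτ+b)/(cτ+d)) = g_{(s,t)A}(τ), where (s,t)A = (sa+tc, sb+td). -/
/-- `g_{(s,t)}(τ) = ζ(τ, sτ + t)`, where `ζ(τ,z) = ζ(τℤ+ℤ, z)`. -/
noncomputable def g (s t : ℚ) (τ : ℂ) : ℂ := wzeta (lat τ) ((s : ℂ) * τ + (t : ℂ))

/-! With `j = cτ + d` and `τ' = (aτ + b)/j`, multiplication by `j⁻¹` carries `ℤτ + ℤ` onto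
`ℤτ' + ℤ` (because `A` is unimodular) and the point `(sa + tc)τ + (sb + td)` to `sτ' + t`.
Since `ζ(μΩ, μz) = μ⁻¹ ζ(Ω, z)`, the factor `j` comes out of `ζ` and cancels against `j⁻¹`. -/

/-- Homogeneity of degree `-1`. It holds term by term after reindexing the sum along `w ↦ μ w`,
so no summability is needed. -/
lemma wzeta_image_mul_left {μ : ℂ} (hμ : μ ≠ 0) (Ω : Set ℂ) (z : ℂ) :
    wzeta ((μ * ·) '' Ω) (μ * z) = μ⁻¹ * wzeta Ω z := by
  let e : {w : ℂ // w ∈ Ω ∧ w ≠ 0} ≃ {w : ℂ // w ∈ (μ * ·) '' Ω ∧ w ≠ 0} :=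
    (Equiv.mulLeft₀ μ hμ).subtypeEquiv fun w => by
      simp [(mul_right_injective₀ hμ).mem_set_image, hμ]
  have hterm (w : {w : ℂ // w ∈ Ω ∧ w ≠ 0}) :
      1 / (μ * z - e w) + 1 / (e w : ℂ) + μ * z / (e w : ℂ) ^ 2 =
        μ⁻¹ * (1 / (z - w) + 1 / (w : ℂ) + z / (w : ℂ) ^ 2) := by
    have hw : (w : ℂ) ≠ 0 := w.2.2
    change 1 / (μ * z - μ * w) + 1 / (μ * w) + μ * z / (μ * w) ^ 2 = _
    rw [← mul_sub]
    field_simp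
  rw [wzeta, wzeta, ← e.tsum_eq, tsum_congr hterm, tsum_mul_left, mul_add, one_div, one_div,
    mul_inv]

lemma int_mul_add_int_ne_zero {a b c d : ℤ} (hA : a * d - b * c = 1) {τ : ℂ} (hτ : τ.im ≠ 0) :
    (c : ℂ) * τ + d ≠ 0 := by
  intro h
  have hc : c = 0 := by
    have him := congrArg Complex.im h
    simp only [Complex.add_im, Complex.mul_im, Complex.intCast_re, Complex.intCast_im, zero_mul,
      add_zero, Complex.zero_im, mul_eq_zero, hτ, or_false] at him
    exact_mod_cast him
  subst hc
  have hd : d = 0 := by simpa using h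
  simp [hd] at hA

lemma lat_moebius {a b c d : ℤ} (hA : a * d - b * c = 1) {τ : ℂ} (hj : (c : ℂ) * τ + d ≠ 0) :
    lat ((a * τ + b) / (c * τ + d)) = (((c : ℂ) * τ + d)⁻¹ * ·) '' lat τ := by
  ext w
  constructor
  · rintro ⟨m, n, rfl⟩
    refine ⟨(m * a + n * c : ℤ) * τ + (m * b + n * d : ℤ), ⟨_, _, rfl⟩, ?_⟩
    push_cast
    field_simp
    ring
  · rintro ⟨v, ⟨m, n, rfl⟩, rfl⟩
    refine ⟨m * d - n * c, n * a - m * b, ?_⟩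
    have hA' : (a : ℂ) * d - b * c = 1 := by exact_mod_cast hA
    push_cast
    field_simp
    linear_combination (-((m : ℂ) * τ + n)) * hA'

theorem g_slash_one_general (s t : ℚ)
    (a b c d : ℤ) (hA : a * d - b * c = 1) (τ : ℂ) (hτ : 0 < τ.im) :
    ((c : ℂ) * τ + (d : ℂ))⁻¹ *
        g s t (((a : ℂ) * τ + (b : ℂ)) / ((c : ℂ) * τ + (d : ℂ))) =
      g (s * a + t * c) (s * b + t * d) τ := by
  have hj := int_mul_add_int_ne_zero hA hτ.ne'
  have hpoint : (s : ℂ) * ((a * τ + b) / (c * τ + d)) + t =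
      ((c : ℂ) * τ + d)⁻¹ * (((s * a + t * c : ℚ) : ℂ) * τ + ((s * b + t * d : ℚ) : ℂ)) := by
    push_cast
    field_simp
    linear_combination (t : ℂ) * (mul_inv_cancel₀ hj).symm
  rw [g, g, hpoint, lat_moebius hA hj, wzeta_image_mul_left (inv_ne_zero hj), inv_inv,
    inv_mul_cancel_left₀ hj]

/-- for `(s,t) ∈ ℚ²∖ℤ²`, `A = ((a,b),(c,d)) ∈ SL(2,ℤ)` and `τ ∈ ℍ`,
`(g_{(s,t)} |₁ A)(τ) = (cτ+d)⁻¹ g_{(s,t)}((aτ+b)/(cτ+d)) = g_{(s,t)A}(τ)`, where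
`(s,t)A = (sa+tc, sb+td)`. -/
theorem g_slash_one (s t : ℚ) (hst : ¬ ∃ m n : ℤ, s = (m : ℚ) ∧ t = (n : ℚ))
    (a b c d : ℤ) (hA : a * d - b * c = 1) (τ : ℂ) (hτ : 0 < τ.im) :
    ((c : ℂ) * τ + (d : ℂ))⁻¹ *
        g s t (((a : ℂ) * τ + (b : ℂ)) / ((c : ℂ) * τ + (d : ℂ))) =
      g (s * a + t * c) (s * b + t * d) τ :=
  g_slash_one_general s t a b c d hA τ hτ
end

section
/- Let (s,t) ∈ ℚ²∖ℤ² and let r ∈ ℤ∖{0} with (rs,rt) ∉ ℤ². Write z(τ) := sτ+t and ω_{c,d}(τ) := cτ+d. Then for all τ ∈ ℍ with z(τ), rz(τ) ∉ ℤτ+ℤ: h_{r,(s,t)}(τ) = (r²−1)/(r·z(τ)) + ∑_{(c,d) ∈ ℤ²∖{(0,0)}} ( r(r−1)·z(τ)² / ((1 − z(τ)/ω_{c,d}(τ))·(1 − r·z(τ)/ω_{c,d}(τ))) )·(1/ω_{c,d}(τ)³), where the sum converges absolutely. -/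
/-- `h_{r,(s,t)} = r·g_{(s,t)} − g_{(rs,rt)}`. -/
noncomputable def h (r : ℤ) (s t : ℚ) (τ : ℂ) : ℂ :=
  (r : ℂ) * g s t τ - g ((r : ℚ) * s) ((r : ℚ) * t) τ

open Function

section Algebra

variable {K : Type*} [Field K]

def zetaSummand (z ω : K) : K := 1 / (z - ω) + 1 / ω + z / ω ^ 2

lemma zetaSummand_eq {z ω : K} (hω : ω ≠ 0) (hzω : z ≠ ω) :
    zetaSummand z ω = z ^ 2 / ((z - ω) * ω ^ 2) := by
  have : z - ω ≠ 0 := sub_ne_zero.mpr hzω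
  unfold zetaSummand
  field_simp
  ring

def expansionTerm (r z ω : K) : K :=
  r * (r - 1) * z ^ 2 / ((1 - z / ω) * (1 - r * z / ω)) * (1 / ω ^ 3)

lemma mul_zetaSummand_sub_zetaSummand_mul {r z ω : K} (hω : ω ≠ 0) (hzω : z ≠ ω)
    (hrzω : r * z ≠ ω) :
    r * zetaSummand z ω - zetaSummand (r * z) ω = expansionTerm r z ω := by
  have h₁ : z - ω ≠ 0 := sub_ne_zero.mpr hzω
  have h₂ : r * z - ω ≠ 0 := sub_ne_zero.mpr hrzω
  rw [zetaSummand_eq hω hzω, zetaSummand_eq hω hrzω, expansionTerm]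
  field_simp
  ring

end Algebra

lemma norm_zetaSummand_le {z ω : ℂ} (hω : ω ≠ 0) (hzω : z ≠ ω) :
    ‖zetaSummand z ω‖ ≤ ‖z‖ ^ 2 * (‖ω - z‖⁻¹ ^ 3 + ‖ω‖⁻¹ ^ 3) := by
  set x := ‖ω - z‖⁻¹
  set y := ‖ω‖⁻¹
  have hx : 0 ≤ x := by positivity
  have hy : 0 ≤ y := by positivity
  have hnorm : ‖zetaSummand z ω‖ = ‖z‖ ^ 2 * (x * y ^ 2) := by
    rw [zetaSummand_eq hω hzω]
    simp only [x, y, norm_div, norm_mul, norm_pow, norm_sub_rev z ω]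
    field_simp
  -- AM-GM `3xy² ≤ x³ + 2y³`, i.e. `(x - y)²(x + 2y) ≥ 0`
  have amgm : x * y ^ 2 ≤ x ^ 3 + y ^ 3 := by
    nlinarith [mul_nonneg (sq_nonneg (x - y)) (by positivity : 0 ≤ x + 2 * y), pow_nonneg hx 3,
      pow_nonneg hy 3]
  rw [hnorm]
  gcongr

def latticePoint (τ : ℂ) (p : ℤ × ℤ) : ℂ := p.1 * τ + p.2

variable {τ : ℂ}

lemma linearIndependent_tau_one (hτ : 0 < τ.im) : LinearIndependent ℝ ![τ, 1] := by
  refine LinearIndependent.pair_iff.mpr fun a b h => ?_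
  have ha : a * τ.im = 0 := by simpa using congrArg Complex.im h
  obtain rfl : a = 0 := (mul_eq_zero.mp ha).resolve_right hτ.ne'
  exact ⟨rfl, by simpa using h⟩

def periodPair (hτ : 0 < τ.im) : PeriodPair := ⟨τ, 1, linearIndependent_tau_one hτ⟩

lemma coe_latticeEquivProd_symm (hτ : 0 < τ.im) (p : ℤ × ℤ) :
    ((periodPair hτ).latticeEquivProd.symm p : ℂ) = latticePoint τ p := by
  rw [PeriodPair.latticeEquiv_symm_apply]
  simp [periodPair, latticePoint]

lemma latticePoint_injective (hτ : 0 < τ.im) : Injective (latticePoint τ) := by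
  intro p q h
  refine (periodPair hτ).latticeEquivProd.symm.injective (Subtype.ext ?_)
  simpa only [coe_latticeEquivProd_symm] using h

lemma latticePoint_ne_zero (hτ : 0 < τ.im) {p : ℤ × ℤ} (hp : p ≠ (0, 0)) :
    latticePoint τ p ≠ 0 := by
  have : latticePoint τ (0, 0) = 0 := by simp [latticePoint]
  exact this ▸ (latticePoint_injective hτ).ne hp

lemma latticePoint_mem_lat (τ : ℂ) (p : ℤ × ℤ) : latticePoint τ p ∈ lat τ := ⟨p.1, p.2, rfl⟩

lemma ne_latticePoint_of_notMem_lat {z : ℂ} (hz : z ∉ lat τ) (p : ℤ × ℤ) :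
    z ≠ latticePoint τ p := by
  rintro rfl
  exact hz (latticePoint_mem_lat τ p)

lemma ne_zero_of_notMem_lat {z : ℂ} (hz : z ∉ lat τ) : z ≠ 0 := by
  simpa [latticePoint] using ne_latticePoint_of_notMem_lat hz (0, 0)

lemma summable_norm_latticePoint_sub_inv_pow_three (hτ : 0 < τ.im) (x : ℂ) :
    Summable fun p : ℤ × ℤ => ‖latticePoint τ p - x‖⁻¹ ^ 3 := by
  refine ((periodPair hτ).latticeEquivProd.toEquiv.symm.summable_iff.mpr
    (ZLattice.summable_norm_sub_inv_pow (periodPair hτ).lattice 3 (by simp) x)).congr fun p => ?_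
  rw [comp_apply, ← coe_latticeEquivProd_symm hτ p]
  rfl

noncomputable def nonzeroLatticeEquiv (hτ : 0 < τ.im) :
    {p : ℤ × ℤ // p ≠ (0, 0)} ≃ {w : ℂ // w ∈ lat τ ∧ w ≠ 0} :=
  .ofBijective (fun p => ⟨latticePoint τ p, latticePoint_mem_lat τ p, latticePoint_ne_zero hτ p.2⟩)
    ⟨fun p q h => Subtype.ext (latticePoint_injective hτ (congrArg Subtype.val h)), by
      rintro ⟨w, ⟨m, n, rfl⟩, hw⟩
      exact ⟨⟨(m, n), by rintro ⟨⟩; simp at hw⟩, rfl⟩⟩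

lemma wzeta_lat_eq (hτ : 0 < τ.im) (z : ℂ) :
    wzeta (lat τ) z =
      1 / z + ∑' p : {p : ℤ × ℤ // p ≠ (0, 0)}, zetaSummand z (latticePoint τ p) :=
  congrArg (1 / z + ·) ((nonzeroLatticeEquiv hτ).tsum_eq (fun w => zetaSummand z w.1)).symm

lemma summable_norm_zetaSummand (hτ : 0 < τ.im) {z : ℂ} (hz : z ∉ lat τ) :
    Summable fun p : {p : ℤ × ℤ // p ≠ (0, 0)} => ‖zetaSummand z (latticePoint τ p)‖ := by
  have hbound := ((summable_norm_latticePoint_sub_inv_pow_three hτ z).add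
    (by simpa only [sub_zero] using summable_norm_latticePoint_sub_inv_pow_three hτ 0)).mul_left
      (‖z‖ ^ 2)
  refine (hbound.subtype _).of_nonneg_of_le (fun _ => norm_nonneg _) fun p => ?_
  exact norm_zetaSummand_le (latticePoint_ne_zero hτ p.2) (ne_latticePoint_of_notMem_lat hz p)

theorem mul_wzeta_sub_wzeta_mul (hτ : 0 < τ.im) {r z : ℂ} (hz : z ∉ lat τ)
    (hrz : r * z ∉ lat τ) :
    Summable (fun p : {p : ℤ × ℤ // p ≠ (0, 0)} => ‖expansionTerm r z (latticePoint τ p)‖) ∧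
    r * wzeta (lat τ) z - wzeta (lat τ) (r * z) =
      (r ^ 2 - 1) / (r * z) +
        ∑' p : {p : ℤ × ℤ // p ≠ (0, 0)}, expansionTerm r z (latticePoint τ p) := by
  have hrz₀ : r * z ≠ 0 := ne_zero_of_notMem_lat hrz
  have hr₀ : r ≠ 0 := left_ne_zero_of_mul hrz₀
  have hz₀ : z ≠ 0 := right_ne_zero_of_mul hrz₀
  have hterm : ∀ p : {p : ℤ × ℤ // p ≠ (0, 0)},
      r * zetaSummand z (latticePoint τ p) - zetaSummand (r * z) (latticePoint τ p) =
        expansionTerm r z (latticePoint τ p) := fun p =>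
    mul_zetaSummand_sub_zetaSummand_mul (latticePoint_ne_zero hτ p.2)
      (ne_latticePoint_of_notMem_lat hz p) (ne_latticePoint_of_notMem_lat hrz p)
  have ha := summable_norm_zetaSummand hτ hz
  have hb := summable_norm_zetaSummand hτ hrz
  refine ⟨((ha.mul_left ‖r‖).add hb).of_nonneg_of_le (fun _ => norm_nonneg _) fun p => ?_, ?_⟩
  · rw [← hterm p, ← norm_mul]
    exact norm_sub_le _ _
  rw [wzeta_lat_eq hτ, wzeta_lat_eq hτ, ← tsum_congr hterm,
    (ha.of_norm.mul_left r).tsum_sub hb.of_norm, tsum_mul_left]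
  field_simp
  ring

theorem h_expansion_general (s t : ℚ) (r : ℤ) (τ : ℂ) (hτ : 0 < τ.im)
    (hz : ((s : ℂ) * τ + (t : ℂ)) ∉ lat τ)
    (hrz : (r : ℂ) * ((s : ℂ) * τ + (t : ℂ)) ∉ lat τ) :
    Summable (fun p : {p : ℤ × ℤ // p ≠ (0, 0)} =>
      ‖(r : ℂ) * ((r : ℂ) - 1) * ((s : ℂ) * τ + (t : ℂ)) ^ 2 /
          ((1 - ((s : ℂ) * τ + (t : ℂ)) / (((p : ℤ × ℤ).1 : ℂ) * τ + ((p : ℤ × ℤ).2 : ℂ))) *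
            (1 - (r : ℂ) * ((s : ℂ) * τ + (t : ℂ)) /
              (((p : ℤ × ℤ).1 : ℂ) * τ + ((p : ℤ × ℤ).2 : ℂ)))) *
          (1 / (((p : ℤ × ℤ).1 : ℂ) * τ + ((p : ℤ × ℤ).2 : ℂ)) ^ 3)‖) ∧
    h r s t τ =
      ((r : ℂ) ^ 2 - 1) / ((r : ℂ) * ((s : ℂ) * τ + (t : ℂ))) +
        ∑' p : {p : ℤ × ℤ // p ≠ (0, 0)},
          (r : ℂ) * ((r : ℂ) - 1) * ((s : ℂ) * τ + (t : ℂ)) ^ 2 /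
              ((1 - ((s : ℂ) * τ + (t : ℂ)) /
                  (((p : ℤ × ℤ).1 : ℂ) * τ + ((p : ℤ × ℤ).2 : ℂ))) *
                (1 - (r : ℂ) * ((s : ℂ) * τ + (t : ℂ)) /
                  (((p : ℤ × ℤ).1 : ℂ) * τ + ((p : ℤ × ℤ).2 : ℂ)))) *
            (1 / (((p : ℤ × ℤ).1 : ℂ) * τ + ((p : ℤ × ℤ).2 : ℂ)) ^ 3) := by
  have hrz_eq : (((r : ℚ) * s : ℚ) : ℂ) * τ + (((r : ℚ) * t : ℚ) : ℂ) =
      (r : ℂ) * ((s : ℂ) * τ + (t : ℂ)) := by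
    push_cast
    ring
  rw [h, g, g, hrz_eq]
  exact mul_wzeta_sub_wzeta_mul hτ hz hrz

/-- for `(s,t) ∈ ℚ²∖ℤ²` and `r ∈ ℤ∖{0}` with `(rs,rt) ∉ ℤ²`, writing
`z = sτ+t` and `ω = cτ+d`, for all `τ ∈ ℍ` with `z, rz ∉ ℤτ+ℤ` one has
`h_{r,(s,t)}(τ) = (r²−1)/(rz) + ∑_{(c,d) ≠ (0,0)} (r(r−1)z² / ((1 − z/ω)(1 − rz/ω)))·(1/ω³)`,
the sum converging absolutely. -/
theorem h_expansion (s t : ℚ) (hst : ¬ ∃ m n : ℤ, s = (m : ℚ) ∧ t = (n : ℚ))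
    (r : ℤ) (hr : r ≠ 0)
    (hrst : ¬ ∃ m n : ℤ, (r : ℚ) * s = (m : ℚ) ∧ (r : ℚ) * t = (n : ℚ))
    (τ : ℂ) (hτ : 0 < τ.im)
    (hz : ((s : ℂ) * τ + (t : ℂ)) ∉ lat τ)
    (hrz : (r : ℂ) * ((s : ℂ) * τ + (t : ℂ)) ∉ lat τ) :
    Summable (fun p : {p : ℤ × ℤ // p ≠ (0, 0)} =>
      ‖(r : ℂ) * ((r : ℂ) - 1) * ((s : ℂ) * τ + (t : ℂ)) ^ 2 /
          ((1 - ((s : ℂ) * τ + (t : ℂ)) / (((p : ℤ × ℤ).1 : ℂ) * τ + ((p : ℤ × ℤ).2 : ℂ))) *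
            (1 - (r : ℂ) * ((s : ℂ) * τ + (t : ℂ)) /
              (((p : ℤ × ℤ).1 : ℂ) * τ + ((p : ℤ × ℤ).2 : ℂ)))) *
          (1 / (((p : ℤ × ℤ).1 : ℂ) * τ + ((p : ℤ × ℤ).2 : ℂ)) ^ 3)‖) ∧
    h r s t τ =
      ((r : ℂ) ^ 2 - 1) / ((r : ℂ) * ((s : ℂ) * τ + (t : ℂ))) +
        ∑' p : {p : ℤ × ℤ // p ≠ (0, 0)},
          (r : ℂ) * ((r : ℂ) - 1) * ((s : ℂ) * τ + (t : ℂ)) ^ 2 /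
              ((1 - ((s : ℂ) * τ + (t : ℂ)) /
                  (((p : ℤ × ℤ).1 : ℂ) * τ + ((p : ℤ × ℤ).2 : ℂ))) *
                (1 - (r : ℂ) * ((s : ℂ) * τ + (t : ℂ)) /
                  (((p : ℤ × ℤ).1 : ℂ) * τ + ((p : ℤ × ℤ).2 : ℂ)))) *
            (1 / (((p : ℤ × ℤ).1 : ℂ) * τ + ((p : ℤ × ℤ).2 : ℂ)) ^ 3) :=
  h_expansion_general s t r τ hτ hz hrz
end
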